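/- Let N be a finite set and let u : 2^N → ℝ. Define the OR interaction I^OR_S(u) = −Σ_{T ⊆ S} (−1)^{|S|−|T|} u(N\T) for every S ⊆ N. Then for every S ⊆ N one has Σ_{T ⊆ N, T ∩ S ≠ ∅} I^OR_T(u) = u(S) − u(∅). -/

import Mathlib

/-! `-IOR u` is the Möbius transform of `W ↦ u (N \ W)` on the Boolean lattice `2^N`, so summing it
over all subsets of `A` inverts the transform and returns `-u (N \ A)`. Taking `A = N` and
`A = N \ S` and subtracting gives the sum over the sets meeting `S`. -/

open Finset

/-- The OR interaction of `S` (with ambient set `N = Finset.univ`):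
`IOR u S = -∑_{T ⊆ S} (-1)^{|S|-|T|} u (N \ T)`. -/
noncomputable def IOR {ι : Type*} [Fintype ι] [DecidableEq ι]
    (u : Finset ι → ℝ) (S : Finset ι) : ℝ :=
  -∑ T ∈ S.powerset, (-1 : ℝ) ^ (S.card - T.card) * u (Finset.univ \ T)

namespace Finset

variable {α R : Type*} [DecidableEq α] [Ring R]

theorem sum_Icc_neg_one_pow_card_sub (s t : Finset α) :
    ∑ u ∈ Icc s t, (-1 : R) ^ (#u - #s) = if s = t then 1 else 0 := by
  by_cases hst : s ⊆ t
  · have hinj : Set.InjOn (s ∪ ·) ((t \ s).powerset : Set (Finset α)) := fun v hv w hw h => by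
      simp only [coe_powerset, Set.mem_preimage, Set.mem_powerset_iff, coe_subset,
        subset_sdiff] at hv hw
      calc v = (s ∪ v) \ s := (union_sdiff_cancel_left hv.2.symm).symm
        _ = (s ∪ w) \ s := congrArg (· \ s) h
        _ = w := union_sdiff_cancel_left hw.2.symm
    rw [Icc_eq_image_powerset hst, sum_image hinj]
    have hcard : ∀ v ∈ (t \ s).powerset, #(s ∪ v) - #s = #v := fun v hv => by
      rw [card_union_of_disjoint (subset_sdiff.mp (mem_powerset.mp hv)).2.symm]
      omega
    rw [sum_congr rfl fun v hv => by rw [hcard v hv]]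
    have := congrArg (Int.cast : ℤ → R) (sum_powerset_neg_one_pow_card (x := t \ s))
    push_cast at this
    simp only [this, sdiff_eq_empty_iff_subset]
    exact if_congr ⟨fun hts => subset_antisymm hst hts, fun h => h ▸ subset_rfl⟩ rfl rfl
  · rw [Icc_eq_empty (fun h => hst h), sum_empty, if_neg (fun h => hst h.le)]

theorem sum_powerset_sum_powerset_neg_one_pow_mul (f : Finset α → R) (a : Finset α) :
    ∑ t ∈ a.powerset, ∑ s ∈ t.powerset, (-1 : R) ^ (#t - #s) * f s = f a := by
  calc ∑ t ∈ a.powerset, ∑ s ∈ t.powerset, (-1 : R) ^ (#t - #s) * f s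
      = ∑ s ∈ a.powerset, ∑ t ∈ Icc s a, (-1 : R) ^ (#t - #s) * f s :=
        sum_comm' fun t s => by
          simp only [mem_powerset, mem_Icc]
          exact ⟨fun ⟨hta, hst⟩ => ⟨⟨hst, hta⟩, hst.trans hta⟩, fun ⟨⟨hst, hta⟩, _⟩ => ⟨hta, hst⟩⟩
    _ = ∑ s ∈ a.powerset, if s = a then f s else 0 := by
        refine sum_congr rfl fun s _ => ?_
        rw [← sum_mul, sum_Icc_neg_one_pow_card_sub, ite_mul, one_mul, zero_mul]
    _ = f a := by rw [sum_ite_eq', if_pos (mem_powerset_self a)]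

end Finset

theorem sum_powerset_IOR {ι : Type*} [Fintype ι] [DecidableEq ι]
    (u : Finset ι → ℝ) (A : Finset ι) :
    ∑ T ∈ A.powerset, IOR u T = -u (univ \ A) := by
  simp only [IOR, sum_neg_distrib]
  rw [sum_powerset_sum_powerset_neg_one_pow_mul (fun W => u (univ \ W))]

/-- **Universal matching property of OR interactions.**
For every `S ⊆ N`, `∑_{T ⊆ N, T ∩ S ≠ ∅} IOR u T = u S - u ∅`. -/
theorem universal_matching_OR {ι : Type*} [Fintype ι] [DecidableEq ι]
    (u : Finset ι → ℝ) (S : Finset ι) :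
    ∑ T ∈ (Finset.univ : Finset (Finset ι)).filter (fun T => (T ∩ S).Nonempty), IOR u T
      = u S - u ∅ := by
  have hdisjoint : univ.filter (fun T : Finset ι => ¬(T ∩ S).Nonempty) = (univ \ S).powerset := by
    ext T
    simp [subset_sdiff, disjoint_iff_inter_eq_empty]
  have hsplit := sum_filter_add_sum_filter_not univ (fun T : Finset ι => (T ∩ S).Nonempty) (IOR u)
  rw [hdisjoint, ← powerset_univ, sum_powerset_IOR, sum_powerset_IOR, sdiff_self, bot_eq_empty,
    sdiff_sdiff_self_left, univ_inter] at hsplit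
  rw [← powerset_univ]
  linarith
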